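/- Let S ⊆ ℝⁿ be a linear subspace and fix X* ∈ ℝⁿ. Assuming Birch's theorem, the map Φ : ℝⁿ_{>0} → ℝⁿ_{>0} sending x₀ to the unique point of exp(X* + S^⊥) ∩ (x₀ + S) is smooth (C^∞) in x₀. -/

import Mathlib

open Real

noncomputable section

/-- Orthogonal projection onto `Sᗮ`, as a map of the whole space. -/
noncomputable def toricProj {n : ℕ} (S : Submodule ℝ (EuclideanSpace ℝ (Fin n))) :
    EuclideanSpace ℝ (Fin n) →L[ℝ] EuclideanSpace ℝ (Fin n) :=
  Sᗮ.subtypeL.comp (Submodule.orthogonalProjectionOnto Sᗮ)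

/-- Coordinatewise exponential. -/
noncomputable def toricExp (n : ℕ) :
    EuclideanSpace ℝ (Fin n) → EuclideanSpace ℝ (Fin n) :=
  fun v => WithLp.toLp 2 (fun i => Real.exp (v i) : Fin n → ℝ)

/-- Diagonal linear map. -/
noncomputable def toricDiag {n : ℕ} (d : Fin n → ℝ) :
    EuclideanSpace ℝ (Fin n) →L[ℝ] EuclideanSpace ℝ (Fin n) :=
  LinearMap.toContinuousLinearMap
    { toFun := fun x => WithLp.toLp 2 (fun i => d i * x i : Fin n → ℝ)
      map_add' := by
        intro x y; ext i
        show d i * (x i + y i) = d i * x i + d i * y i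
        ring
      map_smul' := by
        intro c x; ext i
        show d i * (c * x i) = c * (d i * x i)
        ring }

@[simp] lemma toricDiag_apply {n : ℕ} (d : Fin n → ℝ) (x : EuclideanSpace ℝ (Fin n)) (i : Fin n) :
    toricDiag d x i = d i * x i := rfl

lemma toricExp_hasStrictFDerivAt {n : ℕ} (v : EuclideanSpace ℝ (Fin n)) :
    HasStrictFDerivAt (toricExp n) (toricDiag fun i => Real.exp (v i)) v := by
  rw [hasStrictFDerivAt_piLp]
  intro i
  have h1 := (PiLp.proj (𝕜 := ℝ) 2 (fun _ : Fin n => ℝ) i).hasStrictFDerivAt (x := v)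
  have h3 : (PiLp.proj (𝕜 := ℝ) 2 (fun _ : Fin n => ℝ) i).comp
      (toricDiag fun j => Real.exp (v j))
      = Real.exp (v i) • PiLp.proj (𝕜 := ℝ) 2 (fun _ : Fin n => ℝ) i := by
    ext h
    simp
  rw [h3]
  exact h1.exp

lemma toricExp_contDiff {n : ℕ} : ContDiff ℝ (⊤ : ℕ∞) (toricExp n) := by
  apply contDiff_euclidean.mpr
  intro i
  have h1 : ContDiff ℝ (⊤ : ℕ∞) (fun x : EuclideanSpace ℝ (Fin n) => x i) :=
    (PiLp.proj (𝕜 := ℝ) 2 (fun _ : Fin n => ℝ) i).contDiff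
  exact Real.contDiff_exp.comp h1

/-- Fixing X* and assuming Birch's theorem, the map Φ
sending x₀ ∈ ℝⁿ_{>0} to the unique point of exp(X* + S^⊥) ∩ (x₀ + S)
is C^∞ on ℝⁿ_{>0}. -/
theorem toric_stmt_16 {n : ℕ} (S : Submodule ℝ (EuclideanSpace ℝ (Fin n)))
    (Xs : EuclideanSpace ℝ (Fin n))
    (hBirch : ∀ x₀ : EuclideanSpace ℝ (Fin n), (∀ i, 0 < x₀ i) →
      ∃! z : EuclideanSpace ℝ (Fin n),
        (∃ w ∈ Sᗮ, z = fun i => Real.exp (Xs i + w i)) ∧ z - x₀ ∈ S)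
    (Φ : EuclideanSpace ℝ (Fin n) → EuclideanSpace ℝ (Fin n))
    (hΦ : ∀ x₀ : EuclideanSpace ℝ (Fin n), (∀ i, 0 < x₀ i) →
      (∃ w ∈ Sᗮ, Φ x₀ = fun i => Real.exp (Xs i + w i)) ∧ Φ x₀ - x₀ ∈ S) :
    ContDiffOn ℝ (⊤ : ℕ∞) Φ {x₀ : EuclideanSpace ℝ (Fin n) | ∀ i, 0 < x₀ i} := by
  classical
  set P : (EuclideanSpace ℝ (Fin n)) →L[ℝ] (EuclideanSpace ℝ (Fin n)) := toricProj S with hP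
  -- basic facts about P
  have hPmem : ∀ x : (EuclideanSpace ℝ (Fin n)), P x ∈ Sᗮ := fun x => (Submodule.orthogonalProjectionOnto Sᗮ x).2
  have hPsub : ∀ x : (EuclideanSpace ℝ (Fin n)), x - P x ∈ S := by
    intro x
    have h := Submodule.sub_starProjection_mem_orthogonal (K := Sᗮ) x
    rwa [Submodule.orthogonal_orthogonal] at h
  have hPid : ∀ x ∈ Sᗮ, P x = x := fun x hx => Submodule.starProjection_eq_self_iff.mpr hx
  have hPzeroS : ∀ x ∈ S, P x = 0 := by
    intro x hx
    have : Submodule.orthogonalProjectionOnto Sᗮ x = 0 :=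
      Submodule.orthogonalProjectionOnto_apply_of_mem_orthogonal
        (S.le_orthogonal_orthogonal hx)
    show (Submodule.orthogonalProjectionOnto Sᗮ x : (EuclideanSpace ℝ (Fin n))) = 0
    rw [this]; rfl
  -- the full map F
  set F : (EuclideanSpace ℝ (Fin n)) → (EuclideanSpace ℝ (Fin n)) := fun x => P (toricExp n (Xs + P x)) + (x - P x) with hF
  have hFCD : ContDiff ℝ (⊤ : ℕ∞) F := by
    apply ContDiff.add
    · exact P.contDiff.comp (toricExp_contDiff.comp ((contDiff_const.add P.contDiff)))
    · exact contDiff_id.sub P.contDiff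
  -- derivative of F and its invertibility
  have hFderiv : ∀ w : (EuclideanSpace ℝ (Fin n)), HasStrictFDerivAt F
      ((P.comp ((toricDiag fun i => Real.exp ((Xs + P w) i)).comp P))
        + (ContinuousLinearMap.id ℝ (EuclideanSpace ℝ (Fin n)) - P)) w := by
    intro w
    have h1 : HasStrictFDerivAt (fun x : (EuclideanSpace ℝ (Fin n)) => Xs + P x) (P : (EuclideanSpace ℝ (Fin n)) →L[ℝ] (EuclideanSpace ℝ (Fin n))) w :=
      (P.hasStrictFDerivAt).const_add Xs
    have h2 := (toricExp_hasStrictFDerivAt (Xs + P w)).comp w h1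
    have h3 := (P.hasStrictFDerivAt (x := toricExp n (Xs + P w))).comp w h2
    have h4 : HasStrictFDerivAt (fun x : (EuclideanSpace ℝ (Fin n)) => x - P x)
        (ContinuousLinearMap.id ℝ (EuclideanSpace ℝ (Fin n)) - P) w :=
      (hasStrictFDerivAt_id w).sub P.hasStrictFDerivAt
    exact h3.add h4
  have hLinj : ∀ d : Fin n → ℝ, (∀ i, 0 < d i) →
      Function.Injective ((P.comp ((toricDiag d).comp P))
        + (ContinuousLinearMap.id ℝ (EuclideanSpace ℝ (Fin n)) - P)) := by
    intro d hd h h' hhh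
    -- reduce to kernel
    suffices hker : ∀ u : (EuclideanSpace ℝ (Fin n)),
        (P.comp ((toricDiag d).comp P) + (ContinuousLinearMap.id ℝ (EuclideanSpace ℝ (Fin n)) - P)) u = 0 → u = 0 by
      have : (P.comp ((toricDiag d).comp P) + (ContinuousLinearMap.id ℝ (EuclideanSpace ℝ (Fin n)) - P)) (h - h') = 0 := by
        rw [map_sub, hhh, sub_self]
      have := hker _ this
      exact sub_eq_zero.mp this
    intro u hu
    have hu' : P (toricDiag d (P u)) + (u - P u) = 0 := by
      simpa using hu
    have ha : P (toricDiag d (P u)) ∈ Sᗮ := hPmem _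
    have hb : u - P u ∈ S := hPsub u
    have hb0 : u - P u = 0 := by
      have hmem : u - P u ∈ Sᗮ := by
        have : u - P u = -(P (toricDiag d (P u))) := by
          rw [eq_neg_iff_add_eq_zero, add_comm]; exact hu'
        rw [this]; exact neg_mem ha
      have := (Submodule.orthogonal_disjoint S).le_bot ⟨hb, hmem⟩
      simpa using this
    have hPu : P u = u := by
      have := sub_eq_zero.mp hb0; exact this.symm
    have ha0 : P (toricDiag d u) = 0 := by
      have := hu'
      rw [hPu, sub_self, add_zero] at this
      exact this
    -- u ∈ Sᗮ, toricDiag d u ∈ S, so ⟪toricDiag d u, u⟫ = 0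
    have huS : u ∈ Sᗮ := hPu ▸ hPmem u
    have hdS : toricDiag d u ∈ S := by
      have := hPsub (toricDiag d u)
      rwa [ha0, sub_zero] at this
    have hinner : (inner ℝ (toricDiag d u) u : ℝ) = 0 :=
      (Submodule.mem_orthogonal S u).mp huS _ hdS
    have hsum : ∑ i, d i * u i * u i = 0 := by
      rw [PiLp.inner_apply] at hinner
      simpa [mul_assoc, mul_left_comm] using hinner
    have hzero : ∀ i, d i * u i * u i = 0 := by
      intro i
      have hnn : ∀ j ∈ Finset.univ, 0 ≤ d j * u j * u j := by
        intro j _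
        rw [mul_assoc]
        exact mul_nonneg (hd j).le (mul_self_nonneg _)
      exact (Finset.sum_eq_zero_iff_of_nonneg hnn).mp hsum i (Finset.mem_univ i)
    ext i
    have := hzero i
    have hdne : d i ≠ 0 := (hd i).ne'
    have : u i * u i = 0 := by
      rcases mul_eq_zero.mp ((mul_assoc (d i) (u i) (u i)) ▸ this) with h | h
      · exact absurd h hdne
      · exact h
    exact mul_self_eq_zero.mp this
  -- now prove smoothness at each point
  intro x₀ hx₀
  have hx₀' : ∀ i, 0 < x₀ i := hx₀
  obtain ⟨⟨w₀, hw₀S, hw₀f⟩, hΦS⟩ := hΦ x₀ hx₀'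
  have hΦw₀ : Φ x₀ = toricExp n (Xs + w₀) := by
    apply WithLp.ofLp_injective; rw [hw₀f]; rfl
  -- derivative at w₀ as an equiv
  set d₀ : Fin n → ℝ := fun i => Real.exp ((Xs + P w₀) i) with hd₀
  have hd₀pos : ∀ i, 0 < d₀ i := fun i => Real.exp_pos _
  set L : (EuclideanSpace ℝ (Fin n)) →L[ℝ] (EuclideanSpace ℝ (Fin n)) :=
    (P.comp ((toricDiag d₀).comp P)) + (ContinuousLinearMap.id ℝ (EuclideanSpace ℝ (Fin n)) - P) with hL
  have hLinj' : Function.Injective L := hLinj d₀ hd₀pos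
  have hLsurj : Function.Surjective L :=
    LinearMap.injective_iff_surjective.mp hLinj'
  set eL : (EuclideanSpace ℝ (Fin n)) ≃L[ℝ] (EuclideanSpace ℝ (Fin n)) :=
    (LinearEquiv.ofBijective (L : (EuclideanSpace ℝ (Fin n)) →ₗ[ℝ] (EuclideanSpace ℝ (Fin n))) ⟨hLinj', hLsurj⟩).toContinuousLinearEquiv with heL
  have heLL : (eL : (EuclideanSpace ℝ (Fin n)) →L[ℝ] (EuclideanSpace ℝ (Fin n))) = L := by ext x; rfl
  have hFd : HasStrictFDerivAt F (eL : (EuclideanSpace ℝ (Fin n)) →L[ℝ] (EuclideanSpace ℝ (Fin n))) w₀ := by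
    rw [heLL]; exact hFderiv w₀
  -- local inverse
  set linv := hFd.localInverse F eL w₀ with hlinv
  have hlinvCD : ContDiffAt ℝ (⊤ : ℕ∞) linv (F w₀) := by
    have h := ContDiffAt.to_localInverse (f' := eL) hFCD.contDiffAt hFd.hasFDerivAt (by simp)
    have heq : hFCD.contDiffAt.localInverse (f' := eL) hFd.hasFDerivAt (by simp) = linv := by
      rfl
    rwa [heq] at h
  have hRI : ∀ᶠ y in nhds (F w₀), F (linv y) = y := hFd.eventually_right_inverse
  -- F w₀ = P x₀
  have hFw₀ : F w₀ = P x₀ := by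
    have h1 : P w₀ = w₀ := hPid w₀ hw₀S
    have h2 : P (Φ x₀) = P x₀ := by
      have := hPzeroS _ hΦS
      rw [map_sub] at this
      exact sub_eq_zero.mp this
    show P (toricExp n (Xs + P w₀)) + (w₀ - P w₀) = P x₀
    rw [h1, sub_self, add_zero, ← hΦw₀, h2]
  -- the candidate smooth function
  set g : (EuclideanSpace ℝ (Fin n)) → (EuclideanSpace ℝ (Fin n)) := fun x => toricExp n (Xs + linv (P x)) with hg
  have hgCD : ContDiffAt ℝ (⊤ : ℕ∞) g x₀ := by
    have h1 : ContDiffAt ℝ (⊤ : ℕ∞) (fun x : (EuclideanSpace ℝ (Fin n)) => linv (P x)) x₀ := by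
      have := hlinvCD
      rw [hFw₀] at this
      exact this.comp x₀ P.contDiff.contDiffAt
    exact toricExp_contDiff.contDiffAt.comp x₀ (contDiffAt_const.add h1)
  -- Φ = g near x₀
  have hopen : IsOpen {x : (EuclideanSpace ℝ (Fin n)) | ∀ i, 0 < x i} := by
    have : {x : (EuclideanSpace ℝ (Fin n)) | ∀ i, 0 < x i} = ⋂ i, {x : (EuclideanSpace ℝ (Fin n)) | 0 < x i} := by
      ext x; simp
    rw [this]
    refine isOpen_iInter_of_finite fun i => ?_
    have hc : Continuous (fun x : EuclideanSpace ℝ (Fin n) => x i) :=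
      (PiLp.proj (𝕜 := ℝ) 2 (fun _ : Fin n => ℝ) i).continuous
    exact isOpen_lt continuous_const hc
  have hnear : ∀ᶠ x in nhds x₀, Φ x = g x := by
    have hPx : ∀ᶠ x in nhds x₀, F (linv (P x)) = P x := by
      have hPcont : ContinuousAt P x₀ := P.continuous.continuousAt
      have : nhds (P x₀) = nhds (F w₀) := by rw [hFw₀]
      exact hPcont.eventually (this ▸ hRI)
    have hpos : ∀ᶠ x in nhds x₀, ∀ i, 0 < x i := hopen.eventually_mem hx₀'
    filter_upwards [hPx, hpos] with x hFx hxpos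
    -- let z be the local inverse value
    set z := linv (P x) with hz
    -- show z ∈ Sᗮ
    have hzc : P (toricExp n (Xs + P z)) + (z - P z) = P x := hFx
    have hzS : z - P z = 0 := by
      have h1 : z - P z = P x - P (toricExp n (Xs + P z)) := by
        rw [← hzc]; abel
      have h2 : z - P z ∈ Sᗮ := by
        rw [h1]; exact sub_mem (hPmem x) (hPmem _)
      have h3 : z - P z ∈ S := hPsub z
      have := (Submodule.orthogonal_disjoint S).le_bot ⟨h3, h2⟩
      simpa using this
    have hPz : P z = z := (sub_eq_zero.mp hzS).symm
    have hzmem : z ∈ Sᗮ := hPz ▸ hPmem z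
    have hPe : P (toricExp n (Xs + z)) = P x := by
      have := hzc
      rw [hPz, sub_self, add_zero] at this
      exact this
    have hsubS : toricExp n (Xs + z) - x ∈ S := by
      have h0 : P (toricExp n (Xs + z) - x) = 0 := by
        rw [map_sub, hPe, sub_self]
      have := hPsub (toricExp n (Xs + z) - x)
      rwa [h0, sub_zero] at this
    -- Birch uniqueness
    have hcand : (∃ w ∈ Sᗮ, toricExp n (Xs + z) = fun i => Real.exp (Xs i + w i)) ∧
        toricExp n (Xs + z) - x ∈ S := by
      refine ⟨⟨z, hzmem, ?_⟩, hsubS⟩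
      rfl
    exact (hBirch x hxpos).unique (⟨(hΦ x hxpos).1, (hΦ x hxpos).2⟩) hcand
  exact ((hgCD.congr_of_eventuallyEq hnear)).contDiffWithinAt
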